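/- arXiv:1908.11372 — 3 statements merged into one kernel-verified Lean document; each statement's English description precedes it below -/
import Mathlib

section
/- Let ψ_{ABE} be a pure state on a finite-dimensional tripartite Hilbert space H_A ⊗ H_B ⊗ H_E with reduced state ρ_{AB} = tr_E(ψ_{ABE}), and let {P_a} be a projective measurement on H_A. Define the classical-quantum post-measurement state ρ_{A₀E} = Σ_a |a⟩⟨a| ⊗ tr_{AB}[(P_a ⊗ I_B ⊗ I_E) ψ_{ABE} (P_a ⊗ I_B ⊗ I_E)], and the pinching channel on AB given by T[σ] = Σ_a (P_a ⊗ I_B) σ (P_a ⊗ I_B). Then the conditional von Neumann entropy of the post-measurement state equals the entropy production of the pinching on the Alice–Bob state: H(A₀|E) = H(T[ρ_{AB}]) − H(ρ_{AB}). -/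
open scoped Matrix Kronecker BigOperators ComplexOrder
open MeasureTheory

noncomputable section

def vnEntropy {n : Type*} [Fintype n] [DecidableEq n] (ρ : Matrix n n ℂ) : ℝ :=
  if h : ρ.IsHermitian then -∑ i, h.eigenvalues i * Real.log (h.eigenvalues i) else 0

def ptraceLeft {m n : Type*} [Fintype m] (M : Matrix (m × n) (m × n) ℂ) : Matrix n n ℂ :=
  Matrix.of fun i j => ∑ k, M (k, i) (k, j)

def ptraceRight {m n : Type*} [Fintype n] (M : Matrix (m × n) (m × n) ℂ) : Matrix m m ℂ :=
  Matrix.of fun i j => ∑ k, M (i, k) (j, k)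

def condEnt {m n : Type*} [Fintype m] [Fintype n] [DecidableEq m] [DecidableEq n]
    (ρ : Matrix (m × n) (m × n) ℂ) : ℝ :=
  vnEntropy ρ - vnEntropy (ptraceLeft ρ)

def IsProjMeas {n : Type*} [Fintype n] [DecidableEq n] {ι : Type*} [Fintype ι]
    (P : ι → Matrix n n ℂ) : Prop :=
  (∀ a, (P a)ᴴ = P a) ∧ (∀ a, P a * P a = P a) ∧
    (∀ a b, a ≠ b → P a * P b = 0) ∧ (∑ a, P a = 1)

/-!
Write the pure state as `ψ = |v⟩⟨v|` and reshape `v` into a matrix `M`. The two marginals of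
`|v⟩⟨v|` are `M Mᴴ` and `(Mᴴ M)ᵀ`, which have the same nonzero spectrum, hence the same entropy.
Apply this twice. For `ψ` itself it gives `H(ρ_E) = H(ρ_AB)`, and `ρ_E` is also the `E`-marginal of
the post-measurement state. For the vector `Σ_a (P_a ⊗ 1)|v⟩ ⊗ |a⟩` it gives
`H(ρ_{A₀E}) = H(T[ρ_AB])`: its `AB`-marginal is the pinched state `T[ρ_AB]`, and its marginal on
the outcome register and `E` is the classical-quantum state, because orthogonality of the `P_a`
kills the off-diagonal blocks.
-/

open Matrix Polynomial

variable {m n ι : Type*}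

lemma vnEntropy_eq_sum_roots_charpoly [Fintype n] [DecidableEq n] {A : Matrix n n ℂ}
    (hA : A.IsHermitian) :
    vnEntropy A = (A.charpoly.roots.map fun z => Real.negMulLog z.re).sum := by
  simp [vnEntropy, hA, hA.roots_charpoly_eq_eigenvalues, Real.negMulLog, Finset.sum_neg_distrib]

lemma vnEntropy_transpose [Fintype n] [DecidableEq n] (A : Matrix n n ℂ) :
    vnEntropy Aᵀ = vnEntropy A := by
  by_cases hA : A.IsHermitian
  · rw [vnEntropy_eq_sum_roots_charpoly hA, vnEntropy_eq_sum_roots_charpoly hA.transpose,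
      charpoly_transpose]
  · have hAt : ¬ Aᵀ.IsHermitian := fun h => hA (by simpa using h.transpose)
    simp [vnEntropy, hA, hAt]

/-- The characteristic polynomials of `A Aᴴ` and `Aᴴ A` differ by a power of `X`, and the extra
zero roots do not contribute since `negMulLog 0 = 0`. -/
lemma vnEntropy_mul_conjTranspose [Fintype m] [DecidableEq m] [Fintype n] [DecidableEq n]
    (A : Matrix m n ℂ) : vnEntropy (A * Aᴴ) = vnEntropy (Aᴴ * A) := by
  have hpad := congrArg roots (charpoly_mul_comm' A Aᴴ)
  rw [roots_mul (mul_ne_zero (pow_ne_zero _ X_ne_zero) (charpoly_monic _).ne_zero),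
    roots_mul (mul_ne_zero (pow_ne_zero _ X_ne_zero) (charpoly_monic _).ne_zero),
    roots_X_pow, roots_X_pow] at hpad
  have hsum := congrArg (fun s : Multiset ℂ => (s.map fun z => Real.negMulLog z.re).sum) hpad
  simp only [Multiset.map_add, Multiset.sum_add, Multiset.map_nsmul, Multiset.sum_nsmul,
    Multiset.map_singleton, Multiset.sum_singleton, Complex.zero_re, Real.negMulLog_zero,
    smul_zero, zero_add] at hsum
  rw [vnEntropy_eq_sum_roots_charpoly (isHermitian_mul_conjTranspose_self A),
    vnEntropy_eq_sum_roots_charpoly (isHermitian_conjTranspose_mul_self A), hsum]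

lemma exists_eq_piSingle_of_sum_eq_one [Fintype n] [DecidableEq n] {R : Type*}
    [AddCommMonoidWithOne R] [CharZero R] {d : n → R} (h01 : ∀ i, d i = 0 ∨ d i = 1)
    (hsum : ∑ i, d i = 1) : ∃ i₀, d = Pi.single i₀ 1 := by
  classical
  have hd : d = fun i => if d i = 1 then 1 else 0 := by
    funext i; rcases h01 i with h | h <;> simp [h]
  have hcard : (Finset.univ.filter (d · = 1)).card = 1 := by
    rw [hd, Finset.sum_boole] at hsum
    exact_mod_cast hsum
  obtain ⟨i₀, hi₀⟩ := Finset.card_eq_one.mp hcard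
  refine ⟨i₀, funext fun i => ?_⟩
  have hi : d i = 1 ↔ i = i₀ := by simpa using Finset.ext_iff.mp hi₀ i
  rcases eq_or_ne i i₀ with rfl | hne
  · simpa using hi
  · simpa [hne] using (h01 i).resolve_right (hne ∘ hi.mp)

lemma Matrix.IsHermitian.exists_eq_vecMulVec_star_of_idempotent {𝕜 : Type*} [RCLike 𝕜]
    [Fintype n] [DecidableEq n] {ψ : Matrix n n 𝕜} (hψ : ψ.IsHermitian) (hidem : ψ * ψ = ψ)
    (htr : ψ.trace = 1) : ∃ v : n → 𝕜, ψ = vecMulVec v (star v) := by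
  have h01 : ∀ i, hψ.eigenvalues i = 0 ∨ hψ.eigenvalues i = 1 := fun i =>
    IsIdempotentElem.spectrum_subset ℝ hidem (hψ.eigenvalues_mem_spectrum_real i)
  have hsum : ∑ i, hψ.eigenvalues i = 1 := by
    rw [hψ.trace_eq_sum_eigenvalues] at htr
    exact_mod_cast htr
  obtain ⟨i₀, hi₀⟩ := exists_eq_piSingle_of_sum_eq_one h01 hsum
  have hdiag : (RCLike.ofReal ∘ hψ.eigenvalues : n → 𝕜) = Pi.single i₀ 1 := by
    rw [hi₀]; ext j; by_cases hj : j = i₀ <;> simp [hj]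
  refine ⟨hψ.eigenvectorBasis i₀, ?_⟩
  conv_lhs => rw [hψ.spectral_theorem]
  rw [Unitary.conjStarAlgAut_apply, hdiag, diagonal_single, single_eq_single_vecMulVec_single,
    mul_vecMulVec, vecMulVec_mul, eigenvectorUnitary_mulVec, ← eigenvectorUnitary_mulVec,
    star_mulVec]
  simp [star_eq_conjTranspose]

section PartialTrace

variable [Fintype m] [Fintype n] [DecidableEq n]

lemma ptraceRight_kronecker_one_mul (Q : Matrix m m ℂ) (ρ : Matrix (m × n) (m × n) ℂ) :
    ptraceRight ((Q ⊗ₖ (1 : Matrix n n ℂ)) * ρ) = Q * ptraceRight ρ := by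
  ext i j
  simp only [ptraceRight, of_apply, mul_apply, Fintype.sum_prod_type, kroneckerMap_apply,
    one_apply, mul_ite, mul_one, mul_zero, ite_mul, zero_mul, Finset.sum_ite_eq, Finset.mem_univ,
    if_true, Finset.mul_sum]
  exact Finset.sum_comm

lemma ptraceRight_mul_kronecker_one (ρ : Matrix (m × n) (m × n) ℂ) (R : Matrix m m ℂ) :
    ptraceRight (ρ * (R ⊗ₖ (1 : Matrix n n ℂ))) = ptraceRight ρ * R := by
  ext i j
  simp only [ptraceRight, of_apply, mul_apply, Fintype.sum_prod_type, kroneckerMap_apply,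
    one_apply, mul_ite, mul_one, mul_zero, Finset.sum_ite_eq', Finset.mem_univ, if_true,
    Finset.sum_mul]
  exact Finset.sum_comm

lemma ptraceLeft_mul_kronecker_one (ρ : Matrix (m × n) (m × n) ℂ) (R : Matrix m m ℂ) :
    ptraceLeft (ρ * (R ⊗ₖ (1 : Matrix n n ℂ))) = ptraceLeft ((R ⊗ₖ (1 : Matrix n n ℂ)) * ρ) := by
  ext i j
  simp only [ptraceLeft, of_apply, mul_apply, Fintype.sum_prod_type, kroneckerMap_apply,
    one_apply, mul_ite, mul_one, mul_zero, ite_mul, zero_mul, Finset.sum_ite_eq,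
    Finset.sum_ite_eq', Finset.mem_univ, if_true, mul_comm]
  exact Finset.sum_comm

end PartialTrace

lemma ptraceRight_vecMulVec_star [Fintype n] (v : m × n → ℂ) :
    ptraceRight (vecMulVec v (star v)) = of (Function.curry v) * (of (Function.curry v))ᴴ := by
  ext i j
  simp [ptraceRight, vecMulVec_apply, mul_apply]

lemma ptraceLeft_vecMulVec_star [Fintype m] (v : m × n → ℂ) :
    ptraceLeft (vecMulVec v (star v)) = ((of (Function.curry v))ᴴ * of (Function.curry v))ᵀ := by
  ext i j
  simp [ptraceLeft, vecMulVec_apply, mul_apply, mul_comm]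

lemma vnEntropy_ptraceLeft_vecMulVec_star [Fintype m] [DecidableEq m] [Fintype n]
    [DecidableEq n] (v : m × n → ℂ) :
    vnEntropy (ptraceLeft (vecMulVec v (star v))) =
      vnEntropy (ptraceRight (vecMulVec v (star v))) := by
  rw [ptraceLeft_vecMulVec_star, ptraceRight_vecMulVec_star, vnEntropy_transpose,
    vnEntropy_mul_conjTranspose]

lemma IsProjMeas.kronecker_one [Fintype m] [DecidableEq m] [Fintype n] [DecidableEq n]
    [Fintype ι] {P : ι → Matrix m m ℂ} (hP : IsProjMeas P) :
    IsProjMeas fun a => P a ⊗ₖ (1 : Matrix n n ℂ) := by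
  obtain ⟨hherm, hidem, horth, hsum⟩ := hP
  refine ⟨fun a => ?_, fun a => ?_, fun a b hab => ?_, ?_⟩
  · rw [conjTranspose_kronecker, hherm, conjTranspose_one]
  · rw [← mul_kronecker_mul, hidem, one_mul]
  · rw [← mul_kronecker_mul, horth a b hab, zero_kronecker]
  · rw [← one_kronecker_one, ← hsum]
    ext ⟨i, k⟩ ⟨j, l⟩
    simp [Matrix.sum_apply, Finset.sum_mul]

lemma ptraceLeft_sum [Fintype m] [Fintype ι] (f : ι → Matrix (m × n) (m × n) ℂ) :
    ptraceLeft (∑ a, f a) = ∑ a, ptraceLeft (f a) := by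
  ext i j
  simp only [ptraceLeft, of_apply, Matrix.sum_apply]
  exact Finset.sum_comm

lemma sum_single_kronecker_apply [Fintype ι] [DecidableEq ι] {α : Type*} [NonAssocSemiring α]
    (B : ι → Matrix n n α) (a b : ι) (k l : n) :
    (∑ c, single c c (1 : α) ⊗ₖ B c) (a, k) (b, l) = if a = b then B a k l else 0 := by
  simp only [Matrix.sum_apply, kroneckerMap_apply, single_apply, ite_mul, one_mul, zero_mul]
  split_ifs with hab
  · simp [hab]
  · exact Finset.sum_eq_zero fun c _ => if_neg fun h => hab (h.1.symm.trans h.2)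

lemma ptraceLeft_sum_single_kronecker [Fintype ι] [DecidableEq ι] (B : ι → Matrix n n ℂ) :
    ptraceLeft (∑ a, single a a (1 : ℂ) ⊗ₖ B a) = ∑ a, B a := by
  ext i j
  simp [ptraceLeft, Matrix.sum_apply, single_apply]

lemma IsProjMeas.sum_ptraceLeft_kronecker_one_mul_mul [Fintype m] [DecidableEq m] [Fintype n]
    [DecidableEq n] [Fintype ι] {Q : ι → Matrix m m ℂ} (hQ : IsProjMeas Q)
    (ρ : Matrix (m × n) (m × n) ℂ) :
    ∑ a, ptraceLeft ((Q a ⊗ₖ (1 : Matrix n n ℂ)) * ρ * (Q a ⊗ₖ (1 : Matrix n n ℂ))) =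
      ptraceLeft ρ := by
  calc _ = ∑ a, ptraceLeft ((Q a ⊗ₖ (1 : Matrix n n ℂ)) * ρ) := by
        refine Finset.sum_congr rfl fun a _ => ?_
        rw [ptraceLeft_mul_kronecker_one, ← mul_assoc, ← mul_kronecker_mul, hQ.2.1, one_mul]
    _ = ptraceLeft ρ := by
        rw [← ptraceLeft_sum, ← Finset.sum_mul, (hQ.kronecker_one (n := n)).2.2.2, one_mul]

/-- A purification of the post-measurement state, with the outcome register on the side of `n`. -/
def measurementPurification [Fintype m] [Fintype n] [DecidableEq n] (Q : ι → Matrix m m ℂ)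
    (v : m × n → ℂ) : m × (ι × n) → ℂ :=
  fun p => ((Q p.2.1 ⊗ₖ (1 : Matrix n n ℂ)) *ᵥ v) (p.1, p.2.2)

lemma vecMulVec_measurementPurification_apply [Fintype m] [Fintype n] [DecidableEq n]
    (Q : ι → Matrix m m ℂ) (v : m × n → ℂ) (x y : m) (a b : ι) (k l : n) :
    vecMulVec (measurementPurification Q v) (star (measurementPurification Q v))
        (x, (a, k)) (y, (b, l)) =
      ((Q a ⊗ₖ (1 : Matrix n n ℂ)) * vecMulVec v (star v) * (Q b ⊗ₖ (1 : Matrix n n ℂ))ᴴ)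
        (x, k) (y, l) := by
  rw [mul_vecMulVec, vecMulVec_mul, ← star_mulVec]
  rfl

lemma ptraceRight_measurementPurification [Fintype m] [Fintype n] [DecidableEq n] [Fintype ι]
    (Q : ι → Matrix m m ℂ) (v : m × n → ℂ) :
    ptraceRight (vecMulVec (measurementPurification Q v) (star (measurementPurification Q v))) =
      ∑ a, Q a * ptraceRight (vecMulVec v (star v)) * (Q a)ᴴ := by
  calc _ = ∑ a, ptraceRight ((Q a ⊗ₖ (1 : Matrix n n ℂ)) * vecMulVec v (star v) *
        (Q a ⊗ₖ (1 : Matrix n n ℂ))ᴴ) := by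
        ext x y
        simp only [ptraceRight, of_apply, Matrix.sum_apply, Fintype.sum_prod_type,
          vecMulVec_measurementPurification_apply]
    _ = _ := by
        simp only [conjTranspose_kronecker, conjTranspose_one, ptraceRight_mul_kronecker_one,
          ptraceRight_kronecker_one_mul]

lemma ptraceLeft_measurementPurification [Fintype m] [DecidableEq m] [Fintype n] [DecidableEq n]
    [Fintype ι] [DecidableEq ι] {Q : ι → Matrix m m ℂ} (hQ : IsProjMeas Q) (v : m × n → ℂ) :
    ptraceLeft (vecMulVec (measurementPurification Q v) (star (measurementPurification Q v))) =
      ∑ a, single a a (1 : ℂ) ⊗ₖ ptraceLeft ((Q a ⊗ₖ (1 : Matrix n n ℂ)) * vecMulVec v (star v) *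
        (Q a ⊗ₖ (1 : Matrix n n ℂ))) := by
  ext ⟨a, k⟩ ⟨b, l⟩
  have hblock : ptraceLeft (vecMulVec (measurementPurification Q v)
      (star (measurementPurification Q v))) (a, k) (b, l) = ptraceLeft
        ((Q a ⊗ₖ (1 : Matrix n n ℂ)) * vecMulVec v (star v) * (Q b ⊗ₖ (1 : Matrix n n ℂ))) k l := by
    simp only [ptraceLeft, of_apply, vecMulVec_measurementPurification_apply,
      (hQ.kronecker_one (n := n)).1]
  rw [hblock, sum_single_kronecker_apply]
  split_ifs with hab
  · rw [hab]
  · rw [ptraceLeft_mul_kronecker_one, ← mul_assoc, ← mul_kronecker_mul,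
      hQ.2.2.1 b a (Ne.symm hab), zero_kronecker, zero_mul]
    simp [ptraceLeft]

/-- **Eve's side-information as entropy production on `ρ_{AB}`** (Eq. (5) of the paper).
For a pure state `ψ_{ABE}` and a projective measurement `{P_a}` on Alice's system, the
conditional entropy `H(A₀|E)` of the classical-quantum post-measurement state
`ρ_{A₀E} = Σ_a |a⟩⟨a| ⊗ tr_{AB}[(P_a ⊗ I_B ⊗ I_E) ψ_{ABE} (P_a ⊗ I_B ⊗ I_E)]` equals the
entropy production `H(T[ρ_{AB}]) - H(ρ_{AB})` of the pinching channel
`T[σ] = Σ_a (P_a ⊗ I_B) σ (P_a ⊗ I_B)` on the Alice–Bob reduced state. -/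
theorem cond_entropy_eq_entropy_production
    (nA dA dB dE : ℕ)
    (P : Fin nA → Matrix (Fin dA) (Fin dA) ℂ)
    (hP : IsProjMeas P)
    (ψ : Matrix ((Fin dA × Fin dB) × Fin dE) ((Fin dA × Fin dB) × Fin dE) ℂ)
    (hψ : ψ.PosSemidef) (hψtr : ψ.trace = 1) (hψpure : ψ * ψ = ψ) :
    condEnt (∑ a, Matrix.single a a (1 : ℂ) ⊗ₖ
        ptraceLeft
          (((P a ⊗ₖ (1 : Matrix (Fin dB) (Fin dB) ℂ)) ⊗ₖ (1 : Matrix (Fin dE) (Fin dE) ℂ)) * ψ *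
            ((P a ⊗ₖ (1 : Matrix (Fin dB) (Fin dB) ℂ)) ⊗ₖ (1 : Matrix (Fin dE) (Fin dE) ℂ))))
      = vnEntropy (∑ a, (P a ⊗ₖ (1 : Matrix (Fin dB) (Fin dB) ℂ)) * ptraceRight ψ *
          (P a ⊗ₖ (1 : Matrix (Fin dB) (Fin dB) ℂ)))
        - vnEntropy (ptraceRight ψ) := by
  obtain ⟨v, rfl⟩ := hψ.isHermitian.exists_eq_vecMulVec_star_of_idempotent hψpure hψtr
  have hQ := hP.kronecker_one (n := Fin dB)
  rw [condEnt, ← ptraceLeft_measurementPurification hQ, vnEntropy_ptraceLeft_vecMulVec_star,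
    ptraceRight_measurementPurification, ptraceLeft_measurementPurification hQ,
    ptraceLeft_sum_single_kronecker, hQ.sum_ptraceLeft_kronecker_one_mul_mul,
    vnEntropy_ptraceLeft_vecMulVec_star]
  simp only [hQ.1]
end
end

section
/- Let T be a completely positive trace-preserving map on d×d complex matrices given by Kraus operators V_i with Σ_i V_i† V_i = I, acting as T[σ] = Σ_i V_i σ V_i†, and let T*[X] = Σ_i V_i† X V_i be its adjoint. Let ρ be a density matrix such that T[ρ] and T*[T[ρ]] are positive definite. Then H(T[ρ]) ≥ −tr(ρ ln(T*[T[ρ]])), where ln of a positive definite matrix is defined via the spectral decomposition. -/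
open scoped Matrix Kronecker BigOperators ComplexOrder

noncomputable section

/-- Logarithm of a (positive definite) matrix via its spectral decomposition
(junk value `0` if the matrix is not Hermitian). -/
def matLog {n : Type*} [Fintype n] [DecidableEq n] (A : Matrix n n ℂ) : Matrix n n ℂ :=
  if h : A.IsHermitian then
    (h.eigenvectorUnitary : Matrix n n ℂ) *
      Matrix.diagonal (fun i => (Real.log (h.eigenvalues i) : ℂ)) *
        star (h.eigenvectorUnitary : Matrix n n ℂ)
  else 0

/-- The channel `T[σ] = Σ_i V_i σ V_i†` determined by Kraus operators `V_i`. -/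
def krausChannel {d k : ℕ} (V : Fin k → Matrix (Fin d) (Fin d) ℂ)
    (σ : Matrix (Fin d) (Fin d) ℂ) : Matrix (Fin d) (Fin d) ℂ :=
  ∑ i, V i * σ * (V i)ᴴ

/-- The adjoint channel `T*[X] = Σ_i V_i† X V_i`. -/
def krausAdjoint {d k : ℕ} (V : Fin k → Matrix (Fin d) (Fin d) ℂ)
    (X : Matrix (Fin d) (Fin d) ℂ) : Matrix (Fin d) (Fin d) ℂ :=
  ∑ i, (V i)ᴴ * X * V i

/-!
Writing `log a = ∫_{s>0} ((1 + s)⁻¹ - (a + s)⁻¹) ds` in each eigenvalue turns both sides into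
integrals over `s > 0` of traces of resolvents, and `tr T[ρ] = tr ρ`; so it suffices to show
`tr ρ (T*T[ρ] + s)⁻¹ ≤ tr T[ρ] (T[ρ] + s)⁻¹` for every `s > 0`. With `C = T[ρ] + s` we have
`T*T[ρ] + s = T*[C]`, and the right side is `tr ρ T*[C⁻¹]`, so this is Choi's inequality
`(T*[C])⁻¹ ≤ T*[C⁻¹]`. It holds because `T*[C⁻¹] - (T*[C])⁻¹ = Σ_i W_iᴴ C⁻¹ W_i` with
`W_i = V_i - C V_i (T*[C])⁻¹`.
-/

open MeasureTheory Set Filter Topology Matrix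

namespace Real

theorem hasDerivAt_log_one_add_sub_log_add {a s : ℝ} (ha : 0 < a) (hs : 0 ≤ s) :
    HasDerivAt (fun t => log (1 + t) - log (a + t)) ((1 + s)⁻¹ - (a + s)⁻¹) s :=
  ((((hasDerivAt_id s).const_add 1).log (by positivity)).sub
    (((hasDerivAt_id s).const_add a).log (by positivity))).congr_deriv (by simp)

theorem tendsto_log_one_add_sub_log_add (a : ℝ) :
    Tendsto (fun t => log (1 + t) - log (a + t)) atTop (𝓝 0) := by
  have hpos : ∀ᶠ t in atTop, 0 < 1 + t ∧ 0 < a + t := by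
    filter_upwards [eventually_gt_atTop (|a| + 1)] with t ht
    constructor <;> linarith [neg_abs_le a, abs_nonneg a]
  have hratio : Tendsto (fun t => (1 + t) / (a + t)) atTop (𝓝 1) := by
    have h : Tendsto (fun t => 1 + (1 - a) / (a + t)) atTop (𝓝 1) := by
      simpa using ((tendsto_const_nhds (x := 1 - a)).div_atTop
        (tendsto_atTop_add_const_left _ a tendsto_id)).const_add 1
    refine h.congr' ?_
    filter_upwards [hpos] with t ht
    field_simp [ht.2.ne']
    ring
  have h := (continuousAt_log one_ne_zero).tendsto.comp hratio
  rw [log_one] at h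
  refine h.congr' ?_
  filter_upwards [hpos] with t ht
  rw [Function.comp_apply, log_div ht.1.ne' ht.2.ne']

theorem integrableOn_inv_one_add_sub_inv_add {a : ℝ} (ha : 0 < a) :
    IntegrableOn (fun s => (1 + s)⁻¹ - (a + s)⁻¹) (Ioi 0) := by
  have hderiv := fun s (hs : s ∈ Ici (0 : ℝ)) => hasDerivAt_log_one_add_sub_log_add ha hs
  rcases le_total 1 a with h | h
  · refine integrableOn_Ioi_deriv_of_nonneg' hderiv (fun s hs => ?_)
      (tendsto_log_one_add_sub_log_add a)
    have : (a + s)⁻¹ ≤ (1 + s)⁻¹ := inv_anti₀ (by linarith [mem_Ioi.mp hs]) (by linarith)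
    linarith
  · refine integrableOn_Ioi_deriv_of_nonpos' hderiv (fun s hs => ?_)
      (tendsto_log_one_add_sub_log_add a)
    have : (1 + s)⁻¹ ≤ (a + s)⁻¹ := inv_anti₀ (by linarith [mem_Ioi.mp hs]) (by linarith)
    linarith

theorem integral_inv_one_add_sub_inv_add {a : ℝ} (ha : 0 < a) :
    ∫ s in Ioi 0, ((1 + s)⁻¹ - (a + s)⁻¹) = log a := by
  rw [integral_Ioi_of_hasDerivAt_of_tendsto' (fun s hs => hasDerivAt_log_one_add_sub_log_add ha hs)
    (integrableOn_inv_one_add_sub_inv_add ha) (tendsto_log_one_add_sub_log_add a)]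
  simp

end Real

namespace Matrix

variable {n : Type*} [Fintype n] [DecidableEq n]

namespace IsHermitian

variable {B : Matrix n n ℂ} (hB : B.IsHermitian)

theorem cfc_eq_mul_diagonal_mul (f : ℝ → ℝ) :
    hB.cfc f = (hB.eigenvectorUnitary : Matrix n n ℂ) *
      diagonal (fun j => (f (hB.eigenvalues j) : ℂ)) *
        star (hB.eigenvectorUnitary : Matrix n n ℂ) :=
  Unitary.conjStarAlgAut_apply _ _

theorem matLog_eq_cfc : matLog B = hB.cfc Real.log := by
  rw [matLog, dif_pos hB, cfc_eq_mul_diagonal_mul]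

theorem re_trace_mul_cfc (ρ : Matrix n n ℂ) (f : ℝ → ℝ) :
    (ρ * hB.cfc f).trace.re = ∑ j, ((star (hB.eigenvectorUnitary : Matrix n n ℂ) * ρ *
      (hB.eigenvectorUnitary : Matrix n n ℂ)) j j).re * f (hB.eigenvalues j) := by
  rw [cfc_eq_mul_diagonal_mul, ← Matrix.mul_assoc, ← Matrix.mul_assoc, trace_mul_comm,
    ← Matrix.mul_assoc, ← Matrix.mul_assoc, trace, Complex.re_sum]
  simp [mul_diagonal]

theorem add_smul_one_inv {s : ℝ} (hs : ∀ j, hB.eigenvalues j + s ≠ 0) :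
    (B + (s : ℂ) • 1)⁻¹ = hB.cfc (fun x => (x + s)⁻¹) := by
  set φ := Unitary.conjStarAlgAut ℂ (Matrix n n ℂ) hB.eigenvectorUnitary
  refine inv_eq_right_inv ?_
  calc (B + (s : ℂ) • 1) * hB.cfc (fun x => (x + s)⁻¹)
      = φ ((diagonal (RCLike.ofReal ∘ hB.eigenvalues) + (s : ℂ) • 1) *
          diagonal (RCLike.ofReal ∘ (fun x => (x + s)⁻¹) ∘ hB.eigenvalues)) := by
        rw [map_mul, map_add, map_smul, map_one, ← hB.spectral_theorem]
        rfl
    _ = φ 1 := by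
        rw [smul_one_eq_diagonal, diagonal_add, diagonal_mul_diagonal, ← diagonal_one]
        congr 2
        funext j
        simp [← Complex.ofReal_add, hs j]
    _ = 1 := map_one φ

theorem re_trace_eq_sum (ρ : Matrix n n ℂ) :
    ρ.trace.re = ∑ j, ((star (hB.eigenvectorUnitary : Matrix n n ℂ) * ρ *
      (hB.eigenvectorUnitary : Matrix n n ℂ)) j j).re := by
  have h : (star (hB.eigenvectorUnitary : Matrix n n ℂ) * ρ *
      (hB.eigenvectorUnitary : Matrix n n ℂ)).trace = ρ.trace := by
    rw [trace_mul_cycle, mem_unitaryGroup_iff.mp hB.eigenvectorUnitary.2, Matrix.one_mul]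
  rw [← h, trace, Complex.re_sum]
  rfl

theorem re_trace_resolvent_eq_sum (ρ : Matrix n n ℂ) {s : ℝ} (hs : ∀ j, hB.eigenvalues j + s ≠ 0) :
    ρ.trace.re * (1 + s)⁻¹ - (ρ * (B + (s : ℂ) • 1)⁻¹).trace.re =
      ∑ j, ((star (hB.eigenvectorUnitary : Matrix n n ℂ) * ρ *
        (hB.eigenvectorUnitary : Matrix n n ℂ)) j j).re *
          ((1 + s)⁻¹ - (hB.eigenvalues j + s)⁻¹) := by
  simp only [hB.add_smul_one_inv hs, re_trace_mul_cfc, hB.re_trace_eq_sum ρ, Finset.sum_mul,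
    mul_sub, Finset.sum_sub_distrib]

theorem star_eigenvectorUnitary_mul_mul_apply_self (j : n) :
    (star (hB.eigenvectorUnitary : Matrix n n ℂ) * B * (hB.eigenvectorUnitary : Matrix n n ℂ)) j j =
      hB.eigenvalues j := by
  have h := hB.conjStarAlgAut_star_eigenvectorUnitary
  rw [Unitary.conjStarAlgAut_star_apply] at h
  simp [h]

end IsHermitian

theorem PosDef.integrableOn_re_trace_resolvent {B : Matrix n n ℂ} (hB : B.PosDef)
    (ρ : Matrix n n ℂ) :
    IntegrableOn (fun s : ℝ => ρ.trace.re * (1 + s)⁻¹ - (ρ * (B + (s : ℂ) • 1)⁻¹).trace.re)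
      (Ioi 0) := by
  refine IntegrableOn.congr_fun ?_ (fun s hs => (hB.1.re_trace_resolvent_eq_sum ρ
    fun j => (add_pos (hB.eigenvalues_pos j) hs).ne').symm) measurableSet_Ioi
  exact integrable_finsetSum _ fun j _ =>
    (Real.integrableOn_inv_one_add_sub_inv_add (hB.eigenvalues_pos j)).const_mul _

theorem PosDef.re_trace_mul_matLog_eq_integral {B : Matrix n n ℂ} (hB : B.PosDef)
    (ρ : Matrix n n ℂ) :
    (ρ * matLog B).trace.re =
      ∫ s in Ioi (0 : ℝ), (ρ.trace.re * (1 + s)⁻¹ - (ρ * (B + (s : ℂ) • 1)⁻¹).trace.re) := by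
  rw [setIntegral_congr_fun measurableSet_Ioi fun s hs => hB.1.re_trace_resolvent_eq_sum ρ
      fun j => (add_pos (hB.eigenvalues_pos j) hs).ne',
    integral_finsetSum _ fun j _ =>
      (Real.integrableOn_inv_one_add_sub_inv_add (hB.eigenvalues_pos j)).const_mul _]
  simp only [integral_const_mul, Real.integral_inv_one_add_sub_inv_add (hB.eigenvalues_pos _),
    hB.1.matLog_eq_cfc, hB.1.re_trace_mul_cfc]

theorem IsHermitian.vnEntropy_eq {A : Matrix n n ℂ} (hA : A.IsHermitian) :
    vnEntropy A = -(A * matLog A).trace.re := by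
  simp [vnEntropy, dif_pos hA, hA.matLog_eq_cfc, hA.re_trace_mul_cfc,
    hA.star_eigenvectorUnitary_mul_mul_apply_self]

theorem PosSemidef.re_trace_mul_nonneg {ρ M : Matrix n n ℂ} (hρ : ρ.PosSemidef)
    (hM : M.PosSemidef) : 0 ≤ (ρ * M).trace.re := by
  have hM_eq : M = hM.1.cfc id := hM.1.spectral_theorem
  rw [hM_eq, hM.1.re_trace_mul_cfc]
  refine Finset.sum_nonneg fun j _ => mul_nonneg ?_ (hM.eigenvalues_nonneg j)
  exact Complex.nonneg_iff.mp ((hρ.conjTranspose_mul_mul_same _).diag_nonneg) |>.1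

end Matrix

section Kraus

variable {d k : ℕ} (V : Fin k → Matrix (Fin d) (Fin d) ℂ)

theorem trace_krausChannel_mul (ρ X : Matrix (Fin d) (Fin d) ℂ) :
    (krausChannel V ρ * X).trace = (ρ * krausAdjoint V X).trace := by
  simp only [krausChannel, krausAdjoint, Finset.sum_mul, Matrix.mul_sum, trace_sum]
  refine Finset.sum_congr rfl fun i _ => ?_
  rw [trace_mul_comm ρ, Matrix.mul_assoc ((V i)ᴴ * X), trace_mul_cycle (V i)ᴴ X]

theorem krausAdjoint_add_smul_one (hV : ∑ i, (V i)ᴴ * V i = 1) (X : Matrix (Fin d) (Fin d) ℂ)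
    (c : ℂ) : krausAdjoint V (X + c • 1) = krausAdjoint V X + c • 1 := by
  simp only [krausAdjoint, Matrix.mul_add, Matrix.add_mul, Matrix.mul_smul, Matrix.smul_mul,
    Matrix.mul_one, Finset.sum_add_distrib, ← Finset.smul_sum, hV]

theorem krausAdjoint_one (hV : ∑ i, (V i)ᴴ * V i = 1) : krausAdjoint V 1 = 1 := by
  simpa [krausAdjoint] using hV

theorem trace_krausChannel (hV : ∑ i, (V i)ᴴ * V i = 1) (ρ : Matrix (Fin d) (Fin d) ℂ) :
    (krausChannel V ρ).trace = ρ.trace := by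
  rw [← Matrix.mul_one (krausChannel V ρ), trace_krausChannel_mul, krausAdjoint_one V hV,
    Matrix.mul_one]

theorem posDef_krausAdjoint (hV : ∑ i, (V i)ᴴ * V i = 1) {X : Matrix (Fin d) (Fin d) ℂ}
    (hX : X.PosDef) : (krausAdjoint V X).PosDef := by
  refine PosDef.of_dotProduct_mulVec_pos
    (isSelfAdjoint_sum _ fun i _ => isHermitian_conjTranspose_mul_mul _ hX.1) fun x hx => ?_
  have hterm : ∀ i, star x ⬝ᵥ (((V i)ᴴ * X * V i) *ᵥ x) = star (V i *ᵥ x) ⬝ᵥ (X *ᵥ (V i *ᵥ x)) :=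
    fun i => by simp only [star_mulVec, dotProduct_mulVec, vecMul_vecMul, ← mulVec_mulVec]
  obtain ⟨i, hi⟩ : ∃ i, V i *ᵥ x ≠ 0 := by
    by_contra! h
    apply hx
    rw [← one_mulVec x, ← hV, sum_mulVec]
    simp only [← mulVec_mulVec, h, mulVec_zero, Finset.sum_const_zero]
  simp only [krausAdjoint, sum_mulVec, dotProduct_sum, hterm]
  exact Finset.sum_pos' (fun j _ => (hX.posSemidef.dotProduct_mulVec_nonneg _))
    ⟨i, Finset.mem_univ i, hX.dotProduct_mulVec_pos hi⟩

theorem posSemidef_krausAdjoint_inv_sub_inv (hV : ∑ i, (V i)ᴴ * V i = 1)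
    {C : Matrix (Fin d) (Fin d) ℂ} (hC : C.PosDef) :
    (krausAdjoint V C⁻¹ - (krausAdjoint V C)⁻¹).PosSemidef := by
  set G := (krausAdjoint V C)⁻¹
  have hC_unit := (isUnit_iff_isUnit_det C).mp hC.isUnit
  have hG : G * krausAdjoint V C = 1 :=
    nonsing_inv_mul _ ((isUnit_iff_isUnit_det _).mp (posDef_krausAdjoint V hV hC).isUnit)
  have hG_herm : Gᴴ = G := (posDef_krausAdjoint V hV hC).1.inv.eq
  have hcancel : ∀ X : Matrix (Fin d) (Fin d) ℂ, C⁻¹ * (C * X) = X := fun X => by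
    rw [← Matrix.mul_assoc, nonsing_inv_mul C hC_unit, Matrix.one_mul]
  have hcancel' : ∀ X : Matrix (Fin d) (Fin d) ℂ, C * (C⁻¹ * X) = X := fun X => by
    rw [← Matrix.mul_assoc, mul_nonsing_inv C hC_unit, Matrix.one_mul]
  have hterm : ∀ i, (V i - C * V i * G)ᴴ * C⁻¹ * (V i - C * V i * G) =
      (V i)ᴴ * C⁻¹ * V i - (V i)ᴴ * V i * G - G * ((V i)ᴴ * V i) + G * ((V i)ᴴ * C * V i) * G := by
    intro i
    simp only [conjTranspose_sub, conjTranspose_mul, hC.1.eq, hG_herm, sub_mul, mul_sub,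
      Matrix.mul_assoc, hcancel, hcancel']
    abel
  have hsum : krausAdjoint V C⁻¹ - G =
      ∑ i, (V i - C * V i * G)ᴴ * C⁻¹ * (V i - C * V i * G) := by
    simp only [hterm, Finset.sum_add_distrib, Finset.sum_sub_distrib, ← Finset.sum_mul,
      ← Finset.mul_sum, hV, Matrix.one_mul, Matrix.mul_one]
    change _ = krausAdjoint V C⁻¹ - G - G + G * krausAdjoint V C * G
    rw [hG, Matrix.one_mul]
    abel
  rw [hsum]
  exact posSemidef_sum _ fun i _ => hC.inv.posSemidef.conjTranspose_mul_mul_same _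

theorem re_trace_mul_inv_krausAdjoint_le (hV : ∑ i, (V i)ᴴ * V i = 1)
    {ρ C : Matrix (Fin d) (Fin d) ℂ} (hρ : ρ.PosSemidef) (hC : C.PosDef) :
    (ρ * (krausAdjoint V C)⁻¹).trace.re ≤ (krausChannel V ρ * C⁻¹).trace.re := by
  have h := hρ.re_trace_mul_nonneg (posSemidef_krausAdjoint_inv_sub_inv V hV hC)
  rw [Matrix.mul_sub, trace_sub, Complex.sub_re, ← trace_krausChannel_mul] at h
  linarith

end Kraus

theorem entropy_ge_neg_trace_log_adjoint_general
    (d k : ℕ) (V : Fin k → Matrix (Fin d) (Fin d) ℂ)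
    (hV : ∑ i, (V i)ᴴ * V i = 1)
    (ρ : Matrix (Fin d) (Fin d) ℂ) (hρ : ρ.PosSemidef)
    (hTρ : (krausChannel V ρ).PosDef) :
    vnEntropy (krausChannel V ρ) ≥
      -((ρ * matLog (krausAdjoint V (krausChannel V ρ))).trace).re := by
  set A := krausChannel V ρ
  have hB := posDef_krausAdjoint V hV hTρ
  have hA_int := hTρ.integrableOn_re_trace_resolvent A
  rw [trace_krausChannel V hV] at hA_int
  rw [hTρ.1.vnEntropy_eq, ge_iff_le, neg_le_neg_iff, hTρ.re_trace_mul_matLog_eq_integral,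
    hB.re_trace_mul_matLog_eq_integral, trace_krausChannel V hV]
  refine setIntegral_mono_on hA_int (hB.integrableOn_re_trace_resolvent ρ) measurableSet_Ioi
    fun s hs => ?_
  have hC : (A + (s : ℂ) • 1).PosDef :=
    hTρ.add_posSemidef (PosSemidef.one.smul (Complex.zero_le_real.mpr (le_of_lt hs)))
  have h := re_trace_mul_inv_krausAdjoint_le V hV hρ hC
  rw [krausAdjoint_add_smul_one V hV] at h
  linarith

/-- **The operator-Jensen step** in the paper's derivation: for a CPTP map `T` with Kraus
operators `V_i` (so `Σ_i V_i† V_i = I`) and a density matrix `ρ` with `T[ρ]` and `T*[T[ρ]]`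
positive definite, `H(T[ρ]) ≥ -tr(ρ ln(T*[T[ρ]]))`. -/
theorem entropy_ge_neg_trace_log_adjoint
    (d k : ℕ) (V : Fin k → Matrix (Fin d) (Fin d) ℂ)
    (hV : ∑ i, (V i)ᴴ * V i = 1)
    (ρ : Matrix (Fin d) (Fin d) ℂ) (hρ : ρ.PosSemidef) (hρtr : ρ.trace = 1)
    (hTρ : (krausChannel V ρ).PosDef)
    (hTTρ : (krausAdjoint V (krausChannel V ρ)).PosDef) :
    vnEntropy (krausChannel V ρ) ≥
      -((ρ * matLog (krausAdjoint V (krausChannel V ρ))).trace).re :=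
  entropy_ge_neg_trace_log_adjoint_general d k V hV ρ hρ hTρ
end
end

section
/- Let Φ be a positive linear map on d×d complex matrices (taking d×d matrices to d'×d' matrices) that is unital, i.e. Φ[I_d] = I_{d'}. Then for every positive definite d×d matrix A such that Φ[A] is positive definite, Φ[ln A] ≤ ln Φ[A] in the Löwner (positive semidefinite) order, where the matrix logarithm of a positive definite matrix is defined via the spectral decomposition. -/
open scoped Matrix BigOperators ComplexOrder

noncomputable section

/-!
Write `A = ∑ λᵢ Pᵢ` and `Φ A = ∑ μⱼ Rⱼ` spectrally. Then `Qᵢ = Φ Pᵢ` is a positive resolution of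
the identity with `∑ λᵢ Qᵢ = ∑ μⱼ Rⱼ`, and against a fixed vector `v`, with weights
`qᵢ = ⟪v, Qᵢ v⟫` and `pⱼ = ⟪v, Rⱼ v⟫`, the claim reads `∑ qᵢ log λᵢ ≤ ∑ pⱼ log μⱼ`.
Two Cauchy–Schwarz inequalities give the resolvent bound `∑ pⱼ / (μⱼ + s) ≤ ∑ qᵢ / (λᵢ + s)`
for every `s ≥ 0` (Choi's inequality for the inverse). Integrating it against `ds`, as in
`log x = ∫₀^∞ ((1 + s)⁻¹ - (x + s)⁻¹) ds`, gives the claim; the integral is replaced by the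
observation that `s ↦ ∑ qᵢ log (λᵢ + s) - ∑ pⱼ log (μⱼ + s)` is monotone and tends to `0`.
-/

open Matrix Finset Filter Topology RCLike

namespace Matrix.IsHermitian

variable {𝕜 n : Type*} [RCLike 𝕜] [Fintype n] [DecidableEq n] {A : Matrix n n 𝕜}
  (hA : A.IsHermitian)

def eigenProj (i : n) : Matrix n n 𝕜 :=
  Unitary.conjStarAlgAut 𝕜 _ hA.eigenvectorUnitary (single i i 1)

lemma eigenProj_posSemidef (i : n) : (hA.eigenProj i).PosSemidef := by
  have hE : (single i i (1 : 𝕜)).PosSemidef := by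
    rw [← diagonal_single]
    exact .diagonal (Pi.single_nonneg.mpr zero_le_one)
  simpa [eigenProj, ← star_eq_conjTranspose] using
    hE.mul_mul_conjTranspose_same (hA.eigenvectorUnitary : Matrix n n 𝕜)

lemma sum_eigenProj : ∑ i, hA.eigenProj i = 1 := by
  simp only [eigenProj, ← map_sum, sum_single_one, map_one]

lemma eigenProj_mul_eigenProj (i j : n) :
    hA.eigenProj i * hA.eigenProj j = if i = j then hA.eigenProj i else 0 := by
  simp only [eigenProj, ← map_mul]
  split_ifs with h
  · rw [h, single_mul_single_same, mul_one]
  · rw [single_mul_single_of_ne (c := 1) i i j h 1, map_zero]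

lemma cfc_eq_sum_smul_eigenProj (f : ℝ → ℝ) :
    hA.cfc f = ∑ i, (f (hA.eigenvalues i) : 𝕜) • hA.eigenProj i := by
  simp only [IsHermitian.cfc, eigenProj, ← map_smul, ← map_sum, smul_single, smul_eq_mul, mul_one,
    sum_single_eq_diagonal]
  rfl

lemma eq_sum_smul_eigenProj : A = ∑ i, (hA.eigenvalues i : 𝕜) • hA.eigenProj i := by
  conv_lhs => rw [hA.spectral_theorem]
  exact hA.cfc_eq_sum_smul_eigenProj id

end Matrix.IsHermitian

namespace Real

variable {ι κ : Type*} [Fintype ι] [Fintype κ]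

lemma tendsto_sum_mul_log_add_sub_sum_mul_log_add {a : ι → ℝ} {b : κ → ℝ} {q : ι → ℝ}
    {p : κ → ℝ} (hqp : ∑ i, q i = ∑ j, p j) :
    Tendsto (fun s => ∑ i, q i * log (a i + s) - ∑ j, p j * log (b j + s)) atTop (𝓝 0) := by
  have hlim : ∀ y : ℝ, Tendsto (fun s => log (y + s) - log s) atTop (𝓝 0) := fun y => by
    simpa only [add_comm y] using tendsto_log_comp_add_sub_log y
  have hq := tendsto_finsetSum univ fun i _ => (hlim (a i)).const_mul (q i)
  have hp := tendsto_finsetSum univ fun j _ => (hlim (b j)).const_mul (p j)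
  have hdiff : Tendsto (fun s => ∑ i, q i * (log (a i + s) - log s)
      - ∑ j, p j * (log (b j + s) - log s)) atTop (𝓝 0) := by
    simpa using hq.sub hp
  refine hdiff.congr fun s => ?_
  simp only [mul_sub, sum_sub_distrib, ← sum_mul, hqp]
  ring

theorem sum_mul_log_le_of_sum_div_add_le {a : ι → ℝ} {b : κ → ℝ} {q : ι → ℝ} {p : κ → ℝ}
    (ha : ∀ i, 0 < a i) (hb : ∀ j, 0 < b j) (hqp : ∑ i, q i = ∑ j, p j)
    (h : ∀ s, 0 ≤ s → ∑ j, p j / (b j + s) ≤ ∑ i, q i / (a i + s)) :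
    ∑ i, q i * log (a i) ≤ ∑ j, p j * log (b j) := by
  set F : ℝ → ℝ := fun s => ∑ i, q i * log (a i + s) - ∑ j, p j * log (b j + s)
  have hderiv : ∀ s, 0 ≤ s → HasDerivAt F (∑ i, q i / (a i + s) - ∑ j, p j / (b j + s)) s := by
    intro s hs
    have hlog : ∀ c, 0 < c → HasDerivAt (fun s => log (c + s)) (c + s)⁻¹ s := fun c hc => by
      simpa using ((hasDerivAt_id s).const_add c).log (by positivity)
    simp only [div_eq_mul_inv]
    exact (HasDerivAt.fun_sum fun i _ => (hlog _ (ha i)).const_mul (q i)).sub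
      (HasDerivAt.fun_sum fun j _ => (hlog _ (hb j)).const_mul (p j))
  have hmono : MonotoneOn F (Set.Ici 0) := by
    refine monotoneOn_of_hasDerivWithinAt_nonneg (convex_Ici 0)
      (f' := fun s => ∑ i, q i / (a i + s) - ∑ j, p j / (b j + s))
      (fun s hs => (hderiv s hs).continuousAt.continuousWithinAt) (fun s hs => ?_)
      (fun s hs => ?_) <;> rw [interior_Ici] at hs
    · exact (hderiv s (le_of_lt hs)).hasDerivWithinAt
    · exact sub_nonneg.mpr (h s (le_of_lt hs))
  have hF0 : F 0 ≤ 0 :=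
    ge_of_tendsto (tendsto_sum_mul_log_add_sub_sum_mul_log_add hqp) <|
      (eventually_ge_atTop 0).mono fun s hs => hmono Set.self_mem_Ici hs hs
  simp only [F, add_zero, sub_nonpos] at hF0
  simpa only [mul_comm] using hF0

end Real

namespace Matrix

variable {𝕜 n ι κ : Type*} [RCLike 𝕜] [Fintype ι] [Fintype κ]

lemma isHermitian_sum_ofReal_smul {M : ι → Matrix n n 𝕜} (hM : ∀ i, (M i).IsHermitian)
    (c : ι → ℝ) : (∑ i, (c i : 𝕜) • M i).IsHermitian :=
  isSelfAdjoint_sum _ fun i _ => (hM i).smul (conj_ofReal (c i))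

variable [Fintype n]

lemma re_dotProduct_sum_smul_mulVec (M : ι → Matrix n n 𝕜) (c : ι → ℝ) (u v : n → 𝕜) :
    re (star u ⬝ᵥ (∑ i, (c i : 𝕜) • M i) *ᵥ v) = ∑ i, c i * re (star u ⬝ᵥ M i *ᵥ v) := by
  simp [sum_mulVec, dotProduct_sum, smul_mulVec, dotProduct_smul, smul_re]

lemma re_dotProduct_sum_mulVec (M : ι → Matrix n n 𝕜) (u v : n → 𝕜) :
    re (star u ⬝ᵥ (∑ i, M i) *ᵥ v) = ∑ i, re (star u ⬝ᵥ M i *ᵥ v) := by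
  simp [sum_mulVec, dotProduct_sum]

lemma PosSemidef.re_dotProduct_mulVec_le {Q : Matrix n n 𝕜} (hQ : Q.PosSemidef)
    (u v : n → 𝕜) :
    re (star u ⬝ᵥ Q *ᵥ v) ≤ √(re (star u ⬝ᵥ Q *ᵥ u)) * √(re (star v ⬝ᵥ Q *ᵥ v)) := by
  let _ := Q.toSeminormedAddCommGroup hQ
  let _ := Q.toInnerProductSpace hQ
  have hinner : ∀ x y : n → 𝕜, (inner 𝕜 x y : 𝕜) = star x ⬝ᵥ Q *ᵥ y := fun x y =>
    dotProduct_comm _ _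
  simpa only [norm_eq_sqrt_re_inner (𝕜 := 𝕜), hinner] using re_inner_le_norm (𝕜 := 𝕜) u v

lemma sum_smul_mul_sum_smul_of_mul_eq_ite [DecidableEq κ] {R : κ → Matrix n n 𝕜}
    (hR : ∀ j k, R j * R k = if j = k then R j else 0) (a b : κ → 𝕜) :
    (∑ j, a j • R j) * (∑ k, b k • R k) = ∑ j, (a j * b j) • R j := by
  simp [sum_mul_sum, smul_mul_smul_comm, hR]

variable [DecidableEq n]

/-- Choi's inequality `(∑ w i • Q i)⁻¹ ≤ ∑ (w i)⁻¹ • Q i`, tested against `v`, with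
`u = (∑ w i • Q i)⁻¹ v`. -/
theorem re_dotProduct_le_sum_re_div {Q : ι → Matrix n n 𝕜} (hQ : ∀ i, (Q i).PosSemidef)
    (hQ1 : ∑ i, Q i = 1) {w : ι → ℝ} (hw : ∀ i, 0 < w i) {u v : n → 𝕜}
    (huv : (∑ i, (w i : 𝕜) • Q i) *ᵥ u = v) :
    re (star u ⬝ᵥ v) ≤ ∑ i, re (star v ⬝ᵥ Q i *ᵥ v) / w i := by
  set c : ι → ℝ := fun i => re (star u ⬝ᵥ Q i *ᵥ u)
  set q : ι → ℝ := fun i => re (star v ⬝ᵥ Q i *ᵥ v)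
  set S := re (star u ⬝ᵥ v)
  set T := ∑ i, q i / w i
  have hc : ∀ i, 0 ≤ c i := fun i => (hQ i).re_dotProduct_nonneg u
  have hq : ∀ i, 0 ≤ q i := fun i => (hQ i).re_dotProduct_nonneg v
  have hS_eq : S = ∑ i, w i * c i := by
    rw [← re_dotProduct_sum_smul_mulVec, huv]
  have hS : 0 ≤ S := hS_eq ▸ sum_nonneg fun i _ => mul_nonneg (hw i).le (hc i)
  have hT : 0 ≤ T := sum_nonneg fun i _ => div_nonneg (hq i) (hw i).le
  have hST : S ≤ √S * √T := calc
    S = ∑ i, re (star u ⬝ᵥ Q i *ᵥ v) := by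
      rw [← re_dotProduct_sum_mulVec, hQ1, one_mulVec]
    _ ≤ ∑ i, √(c i) * √(q i) := sum_le_sum fun i _ => (hQ i).re_dotProduct_mulVec_le u v
    _ = ∑ i, √(w i * c i) * √(q i / w i) := sum_congr rfl fun i _ => by
      rw [← Real.sqrt_mul (mul_nonneg (hw i).le (hc i)), ← Real.sqrt_mul (hc i)]
      congr 1
      field_simp [(hw i).ne']
    _ ≤ √S * √T := hS_eq ▸ Real.sum_sqrt_mul_sqrt_le _
      (fun i => mul_nonneg (hw i).le (hc i)) (fun i => div_nonneg (hq i) (hw i).le)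
  nlinarith [Real.sq_sqrt hS, Real.sq_sqrt hT, Real.sqrt_nonneg S, Real.sqrt_nonneg T]

theorem sum_re_div_le_sum_re_div [DecidableEq κ] {Q : ι → Matrix n n 𝕜} {R : κ → Matrix n n 𝕜}
    (hQ : ∀ i, (Q i).PosSemidef) (hQ1 : ∑ i, Q i = 1)
    (hR : ∀ j k, R j * R k = if j = k then R j else 0) (hR1 : ∑ j, R j = 1)
    {a : ι → ℝ} {b : κ → ℝ} (ha : ∀ i, 0 < a i) (hb : ∀ j, b j ≠ 0)
    (hab : ∑ i, (a i : 𝕜) • Q i = ∑ j, (b j : 𝕜) • R j) (v : n → 𝕜) :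
    ∑ j, re (star v ⬝ᵥ R j *ᵥ v) / b j ≤ ∑ i, re (star v ⬝ᵥ Q i *ᵥ v) / a i := by
  set N := ∑ j, (((b j)⁻¹ : ℝ) : 𝕜) • R j
  have hN : (∑ j, (b j : 𝕜) • R j) * N = 1 := by
    rw [sum_smul_mul_sum_smul_of_mul_eq_ite hR]
    simp [hb, hR1]
  have key := re_dotProduct_le_sum_re_div hQ hQ1 ha (u := N *ᵥ v)
    (by rw [hab, mulVec_mulVec, hN, one_mulVec])
  convert key using 1
  rw [star_dotProduct, star_def, conj_re, re_dotProduct_sum_smul_mulVec]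
  simp only [div_eq_inv_mul]

theorem posSemidef_sum_log_smul_sub_sum_log_smul [DecidableEq κ] {Q : ι → Matrix n n 𝕜}
    {R : κ → Matrix n n 𝕜} (hQ : ∀ i, (Q i).PosSemidef) (hQ1 : ∑ i, Q i = 1)
    (hR : ∀ j, (R j).IsHermitian) (hRR : ∀ j k, R j * R k = if j = k then R j else 0)
    (hR1 : ∑ j, R j = 1) {a : ι → ℝ} {b : κ → ℝ} (ha : ∀ i, 0 < a i) (hb : ∀ j, 0 < b j)
    (hab : ∑ i, (a i : 𝕜) • Q i = ∑ j, (b j : 𝕜) • R j) :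
    (∑ j, (Real.log (b j) : 𝕜) • R j - ∑ i, (Real.log (a i) : 𝕜) • Q i).PosSemidef := by
  have hherm : (∑ j, (Real.log (b j) : 𝕜) • R j - ∑ i, (Real.log (a i) : 𝕜) • Q i).IsHermitian :=
    (isHermitian_sum_ofReal_smul hR _).sub
      (isHermitian_sum_ofReal_smul (fun i => (hQ i).isHermitian) _)
  refine .of_dotProduct_mulVec_nonneg hherm fun v =>
    nonneg_iff.mpr ⟨?_, hherm.im_star_dotProduct_mulVec_self v⟩
  rw [sub_mulVec, dotProduct_sub, map_sub, re_dotProduct_sum_smul_mulVec,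
    re_dotProduct_sum_smul_mulVec, sub_nonneg]
  simp_rw [mul_comm (Real.log _)]
  refine Real.sum_mul_log_le_of_sum_div_add_le ha hb ?_ fun s hs => ?_
  · rw [← re_dotProduct_sum_mulVec, ← re_dotProduct_sum_mulVec, hQ1, hR1]
  · refine sum_re_div_le_sum_re_div hQ hQ1 hRR hR1 (a := fun i => a i + s)
      (b := fun j => b j + s) (fun i => by linarith [ha i]) (fun j => (by linarith [hb j] : 0 < b j + s).ne') ?_ v
    simp only [ofReal_add, add_smul, sum_add_distrib, ← smul_sum, hQ1, hR1, hab]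

end Matrix

lemma matLog_eq_sum_log_smul_eigenProj {n : Type*} [Fintype n] [DecidableEq n]
    {A : Matrix n n ℂ} (hA : A.IsHermitian) :
    matLog A = ∑ i, (Real.log (hA.eigenvalues i) : ℂ) • hA.eigenProj i := by
  rw [matLog, dif_pos hA]
  exact hA.cfc_eq_sum_smul_eigenProj Real.log

/-- **Operator Jensen inequality for the logarithm.** If `Φ` is a positive unital linear map
between matrix algebras and `A` is positive definite with `Φ[A]` positive definite, then
`Φ[ln A] ≤ ln Φ[A]` in the Löwner order. -/
theorem log_operator_jensen
    (d d' : ℕ) (Φ : Matrix (Fin d) (Fin d) ℂ →ₗ[ℂ] Matrix (Fin d') (Fin d') ℂ)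
    (hpos : ∀ A : Matrix (Fin d) (Fin d) ℂ, A.PosSemidef → (Φ A).PosSemidef)
    (hunital : Φ 1 = 1)
    (A : Matrix (Fin d) (Fin d) ℂ) (hA : A.PosDef) (hΦA : (Φ A).PosDef) :
    (matLog (Φ A) - Φ (matLog A)).PosSemidef := by
  have hAh := hA.isHermitian
  have hBh := hΦA.isHermitian
  have hQ1 : ∑ i, Φ (hAh.eigenProj i) = 1 := by rw [← map_sum, hAh.sum_eigenProj, hunital]
  have hab : ∑ i, (hAh.eigenvalues i : ℂ) • Φ (hAh.eigenProj i)
      = ∑ j, (hBh.eigenvalues j : ℂ) • hBh.eigenProj j := by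
    have hΦ := congrArg Φ hAh.eq_sum_smul_eigenProj
    simp only [map_sum, map_smul] at hΦ
    exact hΦ.symm.trans hBh.eq_sum_smul_eigenProj
  have key := posSemidef_sum_log_smul_sub_sum_log_smul
    (fun i => hpos _ (hAh.eigenProj_posSemidef i)) hQ1
    (fun j => (hBh.eigenProj_posSemidef j).isHermitian) hBh.eigenProj_mul_eigenProj
    hBh.sum_eigenProj hA.eigenvalues_pos hΦA.eigenvalues_pos hab
  rw [matLog_eq_sum_log_smul_eigenProj hBh, matLog_eq_sum_log_smul_eigenProj hAh, map_sum]
  simp only [map_smul]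
  exact key
end
end
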